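/- arXiv:1902.10179 — 2 statements merged into one kernel-verified Lean document; each statement's English description precedes it below -/
import Mathlib

section
/- Suppose a : ℕ → ℂ satisfies ∑_{m ≤ y, gcd(m,P)=1} |a(m)|² ≤ C y ∏_{p | P}(1 - 1/p) for all y ≥ 1 and all squarefree P. Define b(n) = 0 unless n = s·d² with s squarefree, gcd(s,d)=1 (i.e. n has the shape p₁⋯p_h (p_{h+1}⋯p_r)²), in which case |b(n)| = |a(squarefree part of n)|. Then ∑_{n ≤ x, gcd(n,P)=1} |b(n)|² ≤ ∑_{d ≤ √x} ∑_{m ≤ x/d², gcd(m,P)=1} |a(m)|² ≤ C' x ∏_{p | P}(1 - 1/p) · ∑_{d ≤ √x} d^{-2} plus an error bounded via truncation of the d-sum. -/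
/-!
Choosing for every `n` a factorisation `n = s * d ^ 2` with `‖b n‖ ≤ ‖a s‖` (the given one
when `b n ≠ 0`, the trivial one `n = n * 1 ^ 2` otherwise), the map `n ↦ (d, s)` is injective,
since `n` is recovered from the pair. It sends `n ≤ N` coprime to `P` to a pair with
`d ≤ √N` and `s ≤ N / d²` coprime to `P`, so the mean square of `b` is dominated by the
double sum of `‖a‖²`. Each inner sum is then bounded by the hypothesis at `y = x / d² ≥ 1`.
-/

open Finset

theorem Finset.sum_le_sum_of_injOn {ι κ M : Type*} [AddCommMonoid M] [PartialOrder M]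
    [IsOrderedAddMonoid M] {s : Finset ι} {t : Finset κ} {f : ι → M} {g : κ → M}
    (e : ι → κ) (he : Set.InjOn e s) (hest : Set.MapsTo e s t)
    (hfg : ∀ i ∈ s, f i ≤ g (e i)) (hg : ∀ j ∈ t, 0 ≤ g j) :
    ∑ i ∈ s, f i ≤ ∑ j ∈ t, g j := by
  classical
  calc ∑ i ∈ s, f i ≤ ∑ i ∈ s, g (e i) := sum_le_sum hfg
    _ = ∑ j ∈ s.image e, g j := (sum_image he).symm
    _ ≤ ∑ j ∈ t, g j :=
      sum_le_sum_of_subset_of_nonneg (image_subset_iff.mpr hest) fun j hj _ => hg j hj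

theorem Nat.mem_Icc_one_sqrt_of_mul_sq_mem_Icc {s d N : ℕ} (h : s * d ^ 2 ∈ Icc 1 N) :
    d ∈ Icc 1 N.sqrt ∧ s ∈ Icc 1 (N / d ^ 2) := by
  obtain ⟨hpos, hle⟩ := mem_Icc.mp h
  have hs : 1 ≤ s := Nat.pos_of_ne_zero fun h0 => by simp [h0] at hpos
  have hd : 1 ≤ d := Nat.pos_of_ne_zero fun h0 => by simp [h0] at hpos
  refine ⟨mem_Icc.mpr ⟨hd, Nat.le_sqrt'.mpr ?_⟩, mem_Icc.mpr ⟨hs, ?_⟩⟩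
  · exact (Nat.le_mul_of_pos_left _ hs).trans hle
  · exact (Nat.le_div_iff_mul_le (by positivity)).mpr hle

theorem sum_filter_coprime_le_sum_sum_div_sq {F G : ℕ → ℝ} (hG : ∀ m, 0 ≤ G m)
    (hFG : ∀ n, ∃ s d, n = s * d ^ 2 ∧ F n ≤ G s) (N P : ℕ) :
    ∑ n ∈ (Icc 1 N).filter (Nat.Coprime · P), F n ≤
      ∑ d ∈ Icc 1 N.sqrt, ∑ m ∈ (Icc 1 (N / d ^ 2)).filter (Nat.Coprime · P), G m := by
  choose s d hsd hFG using hFG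
  rw [sum_sigma']
  refine sum_le_sum_of_injOn (fun n => ⟨d n, s n⟩) ?_ ?_ (fun n _ => hFG n)
    (fun _ _ => hG _)
  · intro n _ n' _ h
    simp only [Sigma.mk.injEq, heq_eq_eq] at h
    rw [hsd n, hsd n', h.1, h.2]
  · intro n hn
    obtain ⟨hnN, hnP⟩ := mem_filter.mp hn
    rw [hsd n] at hnN hnP
    obtain ⟨hd, hs⟩ := Nat.mem_Icc_one_sqrt_of_mul_sq_mem_Icc hnN
    exact mem_sigma.mpr ⟨hd, mem_filter.mpr ⟨hs, Nat.Coprime.coprime_mul_right hnP⟩⟩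

theorem exists_mul_sq_and_norm_sq_le {E : Type*} [SeminormedAddGroup E] {a b : ℕ → E}
    (hb0 : ∀ n : ℕ, (¬ ∃ s d : ℕ, Squarefree s ∧ Nat.Coprime s d ∧ n = s * d ^ 2) →
      b n = 0)
    (hb : ∀ s d : ℕ, Squarefree s → Nat.Coprime s d → ‖b (s * d ^ 2)‖ = ‖a s‖) (n : ℕ) :
    ∃ s d, n = s * d ^ 2 ∧ ‖b n‖ ^ 2 ≤ ‖a s‖ ^ 2 := by
  by_cases h : ∃ s d : ℕ, Squarefree s ∧ Nat.Coprime s d ∧ n = s * d ^ 2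
  · obtain ⟨s, d, hs, hsd, rfl⟩ := h
    exact ⟨s, d, rfl, by rw [hb s d hs hsd]⟩
  · exact ⟨n, 1, by ring, by simp [hb0 n h]⟩

theorem one_le_div_sq_of_le_sqrt_floor {x : ℝ} {d : ℕ} (hd : 1 ≤ d)
    (h : d ≤ Nat.sqrt ⌊x⌋₊) : 1 ≤ x / (d : ℝ) ^ 2 := by
  have hdx : d ^ 2 ≤ ⌊x⌋₊ := Nat.le_sqrt'.mp h
  rw [Nat.le_floor_iff' (by positivity)] at hdx
  rw [one_le_div (by positivity)]
  exact_mod_cast hdx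

theorem stmt10_general (a b : ℕ → ℂ) (C : ℝ)
    (ha : ∀ y : ℝ, 1 ≤ y → ∀ P : ℕ, Squarefree P →
      ∑ m ∈ (Finset.Icc 1 ⌊y⌋₊).filter (fun m => Nat.Coprime m P), ‖a m‖ ^ 2 ≤
        C * y * ∏ p ∈ P.primeFactors, (1 - 1 / (p : ℝ)))
    (hb0 : ∀ n : ℕ, (¬ ∃ s d : ℕ, Squarefree s ∧ Nat.Coprime s d ∧ n = s * d ^ 2) →
      b n = 0)
    (hb : ∀ s d : ℕ, Squarefree s → Nat.Coprime s d → ‖b (s * d ^ 2)‖ = ‖a s‖) :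
    ∀ x : ℝ, 1 ≤ x → ∀ P : ℕ, Squarefree P →
      (∑ n ∈ (Finset.Icc 1 ⌊x⌋₊).filter (fun n => Nat.Coprime n P), ‖b n‖ ^ 2 ≤
        ∑ d ∈ Finset.Icc 1 (Nat.sqrt ⌊x⌋₊),
          ∑ m ∈ (Finset.Icc 1 ⌊x / (d : ℝ) ^ 2⌋₊).filter (fun m => Nat.Coprime m P),
            ‖a m‖ ^ 2) ∧
      (∑ d ∈ Finset.Icc 1 (Nat.sqrt ⌊x⌋₊),
          ∑ m ∈ (Finset.Icc 1 ⌊x / (d : ℝ) ^ 2⌋₊).filter (fun m => Nat.Coprime m P),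
            ‖a m‖ ^ 2 ≤
        C * x * (∏ p ∈ P.primeFactors, (1 - 1 / (p : ℝ))) *
          ∑ d ∈ Finset.Icc 1 (Nat.sqrt ⌊x⌋₊), 1 / (d : ℝ) ^ 2) := by
  intro x _ P hP
  have hfloor (d : ℕ) : ⌊x / (d : ℝ) ^ 2⌋₊ = ⌊x⌋₊ / d ^ 2 := by
    rw [← Nat.floor_div_natCast, Nat.cast_pow]
  refine ⟨?_, ?_⟩
  · simp only [hfloor]
    exact sum_filter_coprime_le_sum_sum_div_sq (fun _ => by positivity)
      (exists_mul_sq_and_norm_sq_le hb0 hb) _ P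
  · rw [mul_sum]
    refine sum_le_sum fun d hd => ?_
    obtain ⟨hd1, hd2⟩ := mem_Icc.mp hd
    calc _ ≤ C * (x / (d : ℝ) ^ 2) * ∏ p ∈ P.primeFactors, (1 - 1 / (p : ℝ)) :=
          ha _ (one_le_div_sq_of_le_sqrt_floor hd1 hd2) P hP
      _ = _ := by ring

/-- Transfer estimate (3-10): if the mean square of `a` over integers coprime
to any squarefree `P` is `≤ C y ∏_{p|P}(1-1/p)`, and `|b|` is supported on
numbers of the shape `s·d²` (`s` squarefree, `gcd(s,d)=1`) with
`|b(s·d²)| = |a(s)|`, then the mean square of `b` over `n ≤ x` coprime to `P`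
is bounded by `∑_{d ≤ √x} ∑_{m ≤ x/d², (m,P)=1} |a(m)|²`, which in turn is
`≤ C x ∏_{p|P}(1-1/p) ∑_{d ≤ √x} d⁻²`. -/
theorem stmt10 (a b : ℕ → ℂ) (C : ℝ) (hC : 0 ≤ C)
    (ha : ∀ y : ℝ, 1 ≤ y → ∀ P : ℕ, Squarefree P →
      ∑ m ∈ (Finset.Icc 1 ⌊y⌋₊).filter (fun m => Nat.Coprime m P), ‖a m‖ ^ 2 ≤
        C * y * ∏ p ∈ P.primeFactors, (1 - 1 / (p : ℝ)))
    (hb0 : ∀ n : ℕ, (¬ ∃ s d : ℕ, Squarefree s ∧ Nat.Coprime s d ∧ n = s * d ^ 2) →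
      b n = 0)
    (hb : ∀ s d : ℕ, Squarefree s → Nat.Coprime s d → ‖b (s * d ^ 2)‖ = ‖a s‖) :
    ∀ x : ℝ, 1 ≤ x → ∀ P : ℕ, Squarefree P →
      (∑ n ∈ (Finset.Icc 1 ⌊x⌋₊).filter (fun n => Nat.Coprime n P), ‖b n‖ ^ 2 ≤
        ∑ d ∈ Finset.Icc 1 (Nat.sqrt ⌊x⌋₊),
          ∑ m ∈ (Finset.Icc 1 ⌊x / (d : ℝ) ^ 2⌋₊).filter (fun m => Nat.Coprime m P),
            ‖a m‖ ^ 2) ∧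
      (∑ d ∈ Finset.Icc 1 (Nat.sqrt ⌊x⌋₊),
          ∑ m ∈ (Finset.Icc 1 ⌊x / (d : ℝ) ^ 2⌋₊).filter (fun m => Nat.Coprime m P),
            ‖a m‖ ^ 2 ≤
        C * x * (∏ p ∈ P.primeFactors, (1 - 1 / (p : ℝ))) *
          ∑ d ∈ Finset.Icc 1 (Nat.sqrt ⌊x⌋₊), 1 / (d : ℝ) ^ 2) :=
  stmt10_general a b C ha hb0 hb
end

section
/- Partial summation bound for polynomial perturbations: let a : ℕ → ℂ, x ≥ 1, and let R(n) = ∑_{j=1}^k β_j n^j with |β_j| ≤ 1/(q_j Q_j). Then for any function P̄ : ℕ → ℝ, |∑_{n ≤ x} a(n) e(P̄(n) + R(n))| ≪_k |S(x)| + x · max_{1 ≤ j ≤ k} max_{1 ≤ t ≤ x} (t^{j-1}/(q_j Q_j)) |S(t)|, where S(t) = ∑_{n ≤ t} a(n) e(P̄(n)) and e(θ) = e^{2πiθ}. -/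
/-!
Write `e(P̄(n) + R(n)) = e(R(n)) e(P̄(n))` and sum by parts against `S(t) = ∑_{n ≤ t} a(n) e(P̄(n))`.
The boundary term is `|S(x)|`; each of the at most `x` remaining terms is
`|e(R(t+1)) - e(R(t))| |S(t)| ≤ 2π |R(t+1) - R(t)| |S(t)|`, and the discrete derivative satisfies
`|R(t+1) - R(t)| ≤ ∑_j j 2^{j-1} t^{j-1} / (q_j Q_j)`, so each term is at most a constant times the
largest of the quantities `t^{j-1} |S(t)| / (q_j Q_j)`.
-/

open Finset Complex

/-- `e(θ) = e^{2πiθ}`. -/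
noncomputable def eTwoPi (θ : ℝ) : ℂ := Complex.exp (2 * Real.pi * Complex.I * θ)

lemma eTwoPi_eq_exp (θ : ℝ) : eTwoPi θ = exp (↑(2 * Real.pi * θ) * I) := by
  unfold eTwoPi
  push_cast
  ring_nf

lemma norm_eTwoPi (θ : ℝ) : ‖eTwoPi θ‖ = 1 := by
  rw [eTwoPi_eq_exp, norm_exp_ofReal_mul_I]

lemma eTwoPi_add (a b : ℝ) : eTwoPi (a + b) = eTwoPi a * eTwoPi b := by
  simp only [eTwoPi, ← exp_add]
  push_cast
  ring_nf

lemma norm_eTwoPi_sub_one_le (θ : ℝ) : ‖eTwoPi θ - 1‖ ≤ 2 * Real.pi * |θ| := by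
  rw [eTwoPi_eq_exp, mul_comm]
  simpa [abs_mul, abs_of_pos Real.pi_pos, mul_assoc] using
    Real.norm_exp_I_mul_ofReal_sub_one_le (x := 2 * Real.pi * θ)

lemma norm_eTwoPi_sub_eTwoPi_le (a b : ℝ) :
    ‖eTwoPi a - eTwoPi b‖ ≤ 2 * Real.pi * |a - b| := by
  have h : eTwoPi a - eTwoPi b = eTwoPi b * (eTwoPi (a - b) - 1) := by
    rw [mul_sub, ← eTwoPi_add, add_sub_cancel, mul_one]
  rw [h, norm_mul, norm_eTwoPi, one_mul]
  exact norm_eTwoPi_sub_one_le _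

section PartialSummation

variable {R : Type*}

theorem sum_Icc_mul_eq_sub_sum_range [CommRing R] (f a : ℕ → R) (N : ℕ) :
    ∑ n ∈ Icc 1 N, f n * a n =
      f N * ∑ n ∈ Icc 1 N, a n - ∑ i ∈ range N, (f (i + 1) - f i) * ∑ n ∈ Icc 1 i, a n := by
  induction N with
  | zero => simp
  | succ N ih =>
    rw [sum_Icc_succ_top (by omega), sum_Icc_succ_top (by omega), sum_range_succ, ih]
    ring

theorem norm_sum_Icc_mul_le [SeminormedCommRing R] (f a : ℕ → R) (N : ℕ) {D : ℝ} (hD₀ : 0 ≤ D)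
    (hD : ∀ i ∈ Ico 1 N, ‖f (i + 1) - f i‖ * ‖∑ n ∈ Icc 1 i, a n‖ ≤ D) :
    ‖∑ n ∈ Icc 1 N, f n * a n‖ ≤ ‖f N‖ * ‖∑ n ∈ Icc 1 N, a n‖ + N * D := by
  have hterm : ∀ i ∈ range N, ‖(f (i + 1) - f i) * ∑ n ∈ Icc 1 i, a n‖ ≤ D := by
    intro i hi
    refine (norm_mul_le _ _).trans ?_
    rcases Nat.eq_zero_or_pos i with rfl | hi₀
    · simpa using hD₀
    · exact hD i (mem_Ico.mpr ⟨hi₀, mem_range.mp hi⟩)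
  calc ‖∑ n ∈ Icc 1 N, f n * a n‖
      ≤ ‖f N * ∑ n ∈ Icc 1 N, a n‖ + ‖∑ i ∈ range N, (f (i + 1) - f i) * ∑ n ∈ Icc 1 i, a n‖ := by
        rw [sum_Icc_mul_eq_sub_sum_range]
        exact norm_sub_le _ _
    _ ≤ ‖f N‖ * ‖∑ n ∈ Icc 1 N, a n‖ + N * D := by
        gcongr
        · exact norm_mul_le _ _
        · refine (norm_sum_le _ _).trans ?_
          simpa using sum_le_card_nsmul _ _ _ hterm

end PartialSummation

lemma norm_sum_mul_eTwoPi_add_le (a : ℕ → ℂ) (φ R : ℕ → ℝ) (N : ℕ) {D : ℝ} (hD₀ : 0 ≤ D)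
    (hD : ∀ i ∈ Ico 1 N, |R (i + 1) - R i| * ‖∑ n ∈ Icc 1 i, a n * eTwoPi (φ n)‖ ≤ D) :
    ‖∑ n ∈ Icc 1 N, a n * eTwoPi (φ n + R n)‖ ≤
      ‖∑ n ∈ Icc 1 N, a n * eTwoPi (φ n)‖ + N * (2 * Real.pi * D) := by
  have hfactor : ∀ n, a n * eTwoPi (φ n + R n) = eTwoPi (R n) * (a n * eTwoPi (φ n)) := by
    intro n
    rw [eTwoPi_add]
    ring
  simp only [hfactor]
  refine (norm_sum_Icc_mul_le _ _ N (D := 2 * Real.pi * D) (by positivity) fun i hi => ?_).trans_eq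
    (by rw [norm_eTwoPi, one_mul])
  calc ‖eTwoPi (R (i + 1)) - eTwoPi (R i)‖ * ‖∑ n ∈ Icc 1 i, a n * eTwoPi (φ n)‖
      ≤ 2 * Real.pi * |R (i + 1) - R i| * ‖∑ n ∈ Icc 1 i, a n * eTwoPi (φ n)‖ := by
        gcongr
        exact norm_eTwoPi_sub_eTwoPi_le _ _
    _ ≤ 2 * Real.pi * D := by
        rw [mul_assoc]
        gcongr
        exact hD i hi

lemma abs_add_one_pow_sub_pow_le {x : ℝ} (hx : 1 ≤ x) (j : ℕ) :
    |(x + 1) ^ j - x ^ j| ≤ j * 2 ^ (j - 1) * x ^ (j - 1) := by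
  calc |(x + 1) ^ j - x ^ j| ≤ |x + 1 - x| * j * max |x + 1| |x| ^ (j - 1) :=
        abs_pow_sub_pow_le _ _ _
    _ = j * (x + 1) ^ (j - 1) := by
        rw [add_sub_cancel_left, abs_one, one_mul, abs_of_pos (by linarith), abs_of_pos (by linarith),
          max_eq_left (by linarith)]
    _ ≤ j * (2 * x) ^ (j - 1) := by gcongr; linarith
    _ = j * 2 ^ (j - 1) * x ^ (j - 1) := by ring

lemma abs_sum_mul_add_one_pow_sub_le (β d : ℕ → ℝ) (s : Finset ℕ)
    (hβ : ∀ j ∈ s, |β j| ≤ 1 / d j) {x : ℝ} (hx : 1 ≤ x) :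
    |∑ j ∈ s, β j * (x + 1) ^ j - ∑ j ∈ s, β j * x ^ j| ≤
      ∑ j ∈ s, j * 2 ^ (j - 1) * (x ^ (j - 1) / d j) := by
  rw [← sum_sub_distrib]
  refine (abs_sum_le_sum_abs _ _).trans (sum_le_sum fun j hj => ?_)
  calc |β j * (x + 1) ^ j - β j * x ^ j| = |β j| * |(x + 1) ^ j - x ^ j| := by
        rw [← mul_sub, abs_mul]
    _ ≤ 1 / d j * (j * 2 ^ (j - 1) * x ^ (j - 1)) :=
        mul_le_mul (hβ j hj) (abs_add_one_pow_sub_pow_le hx j) (abs_nonneg _)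
          ((abs_nonneg _).trans (hβ j hj))
    _ = j * 2 ^ (j - 1) * (x ^ (j - 1) / d j) := by ring

lemma abs_sum_mul_add_one_pow_sub_mul_le (β d : ℕ → ℝ) (s : Finset ℕ)
    (hβ : ∀ j ∈ s, |β j| ≤ 1 / d j) {x y M : ℝ} (hx : 1 ≤ x) (hy : 0 ≤ y)
    (hM : ∀ j ∈ s, x ^ (j - 1) / d j * y ≤ M) :
    |∑ j ∈ s, β j * (x + 1) ^ j - ∑ j ∈ s, β j * x ^ j| * y ≤
      (∑ j ∈ s, (j : ℝ) * 2 ^ (j - 1)) * M := by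
  calc |∑ j ∈ s, β j * (x + 1) ^ j - ∑ j ∈ s, β j * x ^ j| * y
      ≤ (∑ j ∈ s, j * 2 ^ (j - 1) * (x ^ (j - 1) / d j)) * y := by
        gcongr
        exact abs_sum_mul_add_one_pow_sub_le β d s hβ hx
    _ = ∑ j ∈ s, j * 2 ^ (j - 1) * (x ^ (j - 1) / d j * y) := by
        simp only [sum_mul, mul_assoc]
    _ ≤ (∑ j ∈ s, (j : ℝ) * 2 ^ (j - 1)) * M := by
        rw [sum_mul]
        gcongr with j hj
        exact hM j hj

theorem norm_sum_mul_eTwoPi_add_poly_le (a : ℕ → ℂ) (φ β d : ℕ → ℝ) (s : Finset ℕ) (N : ℕ)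
    (hβ : ∀ j ∈ s, |β j| ≤ 1 / d j) {M : ℝ} (hM₀ : 0 ≤ M)
    (hM : ∀ j ∈ s, ∀ t ∈ Icc 1 N,
      (t : ℝ) ^ (j - 1) / d j * ‖∑ n ∈ Icc 1 t, a n * eTwoPi (φ n)‖ ≤ M) :
    ‖∑ n ∈ Icc 1 N, a n * eTwoPi (φ n + ∑ j ∈ s, β j * (n : ℝ) ^ j)‖ ≤
      ‖∑ n ∈ Icc 1 N, a n * eTwoPi (φ n)‖ +
        N * (2 * Real.pi * ((∑ j ∈ s, (j : ℝ) * 2 ^ (j - 1)) * M)) := by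
  refine norm_sum_mul_eTwoPi_add_le a φ _ N (by positivity) fun i hi => ?_
  have hi₁ : (1 : ℝ) ≤ i := by exact_mod_cast (mem_Ico.mp hi).1
  push_cast
  exact abs_sum_mul_add_one_pow_sub_mul_le β d s hβ hi₁ (norm_nonneg _)
    fun j hj => hM j hj i (Ico_subset_Icc_self hi)

/-- Partial summation bound (3-11): removing the diophantine error
`R(n) = ∑_{j=1}^k β_j n^j`, `|β_j| ≤ 1/(q_j Q_j)`, from the phase costs at most
`≪_k |S(x)| + x · max_{1≤j≤k} max_{1≤t≤x} (t^{j-1}/(q_j Q_j)) |S(t)|`,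
where `S(t) = ∑_{n ≤ t} a(n) e(P̄(n))`. -/
theorem stmt17 (k : ℕ) (hk : 1 ≤ k) :
    ∃ K : ℝ, 0 < K ∧
      ∀ (a : ℕ → ℂ) (x : ℝ) (β qq QQ : ℕ → ℝ) (Pbar : ℕ → ℝ),
        1 ≤ x →
        (∀ j ∈ Finset.Icc 1 k, 1 ≤ qq j ∧ 1 ≤ QQ j) →
        (∀ j ∈ Finset.Icc 1 k, |β j| ≤ 1 / (qq j * QQ j)) →
        ∃ j ∈ Finset.Icc 1 k, ∃ t ∈ Finset.Icc 1 ⌊x⌋₊,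
          ‖∑ n ∈ Finset.Icc 1 ⌊x⌋₊,
              a n * eTwoPi (Pbar n + ∑ i ∈ Finset.Icc 1 k, β i * (n : ℝ) ^ i)‖ ≤
            K * (‖∑ n ∈ Finset.Icc 1 ⌊x⌋₊, a n * eTwoPi (Pbar n)‖ +
              x * ((t : ℝ) ^ (j - 1) / (qq j * QQ j)) *
                ‖∑ n ∈ Finset.Icc 1 t, a n * eTwoPi (Pbar n)‖) := by
  set C : ℝ := 2 * Real.pi * ∑ j ∈ Icc 1 k, (j : ℝ) * 2 ^ (j - 1)
  refine ⟨1 + C, by positivity, fun a x β qq QQ Pbar hx _ hβ => ?_⟩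
  have hN : 1 ≤ ⌊x⌋₊ := Nat.le_floor (by exact_mod_cast hx)
  set S : ℕ → ℂ := fun t => ∑ n ∈ Icc 1 t, a n * eTwoPi (Pbar n)
  obtain ⟨⟨j₀, t₀⟩, hmem, hmax⟩ := exists_max_image (Icc 1 k ×ˢ Icc 1 ⌊x⌋₊)
    (fun p => (p.2 : ℝ) ^ (p.1 - 1) / (qq p.1 * QQ p.1) * ‖S p.2‖) ⟨(1, 1), by simp [hk, hN]⟩
  obtain ⟨hj₀, ht₀⟩ := mem_product.mp hmem
  refine ⟨j₀, hj₀, t₀, ht₀, ?_⟩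
  set M := (t₀ : ℝ) ^ (j₀ - 1) / (qq j₀ * QQ j₀) * ‖S t₀‖
  have hM₀ : 0 ≤ M := by
    have := (abs_nonneg _).trans (hβ j₀ hj₀)
    rw [one_div, inv_nonneg] at this
    positivity
  have hpartial := norm_sum_mul_eTwoPi_add_poly_le a Pbar β (fun j => qq j * QQ j) (Icc 1 k) ⌊x⌋₊
    hβ hM₀ fun j hj t ht => hmax (j, t) (mem_product.mpr ⟨hj, ht⟩)
  rw [← mul_assoc (2 * Real.pi)] at hpartial
  calc _ ≤ ‖S ⌊x⌋₊‖ + ⌊x⌋₊ * (C * M) := hpartial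
    _ ≤ (1 + C) * (‖S ⌊x⌋₊‖ + x * M) := by
        have hNx : (⌊x⌋₊ : ℝ) ≤ x := Nat.floor_le (by linarith)
        have hC : 0 ≤ C := by positivity
        nlinarith [mul_nonneg hC (norm_nonneg (S ⌊x⌋₊)), mul_nonneg (by linarith : 0 ≤ x) hM₀,
          mul_le_mul_of_nonneg_right hNx (mul_nonneg hC hM₀)]
    _ = _ := by
        simp only [M]
        ring
end
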